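/- arXiv:2304.00389 — 3 statements merged into one kernel-verified Lean document; each statement's English description precedes it below -/
import Mathlib

section
/- Let Σ be a finite set of finite sequences over a type of agents, let F be a finite set of agents, and let Σ \ F denote the subset of sequences in Σ containing no element of F. If Σ' ⊆ Σ \ F is a set of pairwise disjoint sequences (no element of one sequence occurs in another) with |Σ'| > f − |F|, and at most f agents in total are faulty (faulty agents form a set B with |B| ≤ f and F ⊆ B), then there exists a sequence σ ∈ Σ' all of whose elements are non-faulty (not in B). -/
theorem List.card_le_card_of_pairwise_disjoint_of_forall_exists_mem {α : Type*}
    {S : Finset (List α)} {T : Finset α}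
    (hdisj : ∀ σ ∈ S, ∀ σ' ∈ S, σ ≠ σ' → ∀ a ∈ σ, a ∉ σ')
    (hmeet : ∀ σ ∈ S, ∃ a ∈ σ, a ∈ T) : S.card ≤ T.card := by
  have hwitness : ∀ σ : S, ∃ a : T, (a : α) ∈ (σ : List α) := fun ⟨σ, hσ⟩ => by
    obtain ⟨a, haσ, haT⟩ := hmeet σ hσ
    exact ⟨⟨a, haT⟩, haσ⟩
  choose g hg using hwitness
  have hg_inj : Function.Injective g := fun σ τ hστ => by
    by_contra hne
    exact hdisj σ σ.2 τ τ.2 (Subtype.coe_ne_coe.mpr hne) _ (hg σ) (hστ ▸ hg τ)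
  calc S.card = Fintype.card S := (Fintype.card_coe S).symm
    _ ≤ Fintype.card T := Fintype.card_le_of_injective g hg_inj
    _ = T.card := Fintype.card_coe T

theorem exists_correct_chain_general {A : Type}
    (S : Finset (List A)) (B F : Finset A) (f : ℕ)
    (hFB : F ⊆ B) (hB : B.card ≤ f)
    (havoid : ∀ σ ∈ S, ∀ a ∈ σ, a ∉ F)
    (hdisj : ∀ σ ∈ S, ∀ σ' ∈ S, σ ≠ σ' → ∀ a ∈ σ, a ∉ σ')
    (hcard : S.card > f - F.card) :
    ∃ σ ∈ S, ∀ a ∈ σ, a ∉ B := by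
  classical
  by_contra! hfaulty
  have hmeet : ∀ σ ∈ S, ∃ a ∈ σ, a ∈ B \ F := fun σ hσ => by
    obtain ⟨a, haσ, haB⟩ := hfaulty σ hσ
    exact ⟨a, haσ, Finset.mem_sdiff.mpr ⟨haB, havoid σ hσ a haσ⟩⟩
  have hle := List.card_le_card_of_pairwise_disjoint_of_forall_exists_mem hdisj hmeet
  rw [Finset.card_sdiff_of_subset hFB] at hle
  omega

/-- Pigeonhole for disjoint hope chains: if strictly more than f - |F|
pairwise-disjoint nonempty chains avoid F, F ⊆ B, |B| ≤ f, then some chain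
consists entirely of non-faulty agents. -/
theorem exists_correct_chain {A : Type} [DecidableEq A]
    (S : Finset (List A)) (B F : Finset A) (f : ℕ)
    (hFB : F ⊆ B) (hB : B.card ≤ f)
    (hne : ∀ σ ∈ S, σ ≠ [])
    (havoid : ∀ σ ∈ S, ∀ a ∈ σ, a ∉ F)
    (hdisj : ∀ σ ∈ S, ∀ σ' ∈ S, σ ≠ σ' → ∀ a ∈ σ, a ∉ σ')
    (hcard : S.card > f - F.card) :
    ∃ σ ∈ S, ∀ a ∈ σ, a ∉ B :=
  exists_correct_chain_general S B F f hFB hB havoid hdisj hcard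
end

section
/- Let Σ be a set of pairwise disjoint finite sequences of agents with |Σ| ≥ k + f − |F|, such that no sequence in Σ contains an agent from F, where F is a subset of the faulty set B with |B| ≤ f. Then there exist at least k sequences in Σ consisting entirely of non-faulty agents, and hence (taking the last agent of each) there exists a set G of at least k distinct non-faulty agents, each being the last element of some sequence in Σ. -/
/-!
A chain containing a faulty agent contains one from `B \ F`, and by disjointness distinct chains
cannot share it, so at most `|B| - |F| ≤ f - |F|` chains are faulty and at least `k` are correct.
Disjointness also makes the last agents of the correct chains pairwise distinct.
-/

open Finset

namespace List

theorem getLast?_injOn_of_pairwise_disjoint {A : Type*} {S : Set (List A)}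
    (hdisj : ∀ σ ∈ S, ∀ σ' ∈ S, σ ≠ σ' → ∀ a ∈ σ, a ∉ σ') :
    Set.InjOn getLast? S := by
  intro σ hσ σ' hσ' hlast
  by_contra hne
  cases h : σ.getLast? with
  | none =>
    exact hne ((getLast?_eq_none_iff.1 h).trans (getLast?_eq_none_iff.1 (hlast.symm.trans h)).symm)
  | some a =>
    rw [h, eq_comm] at hlast
    exact hdisj σ hσ σ' hσ' hne a (mem_of_getLast? h) (mem_of_getLast? hlast)

end List

theorem card_filter_exists_mem_le {A : Type*} (S : Finset (List A)) (X : Finset A)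
    (hdisj : ∀ σ ∈ S, ∀ σ' ∈ S, σ ≠ σ' → ∀ a ∈ σ, a ∉ σ')
    [DecidablePred fun σ : List A => ∃ a ∈ σ, a ∈ X] :
    #{σ ∈ S | ∃ a ∈ σ, a ∈ X} ≤ #X := by
  refine card_le_card_of_forall_subsingleton (fun σ a => a ∈ σ) ?_ ?_
  · intro σ hσ
    obtain ⟨a, haσ, haX⟩ := (mem_filter.1 hσ).2
    exact ⟨a, haX, haσ⟩
  · rintro a - σ ⟨hσ, haσ⟩ σ' ⟨hσ', haσ'⟩
    by_contra hne
    exact hdisj σ (mem_filter.1 hσ).1 σ' (mem_filter.1 hσ').1 hne a haσ haσ'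

theorem card_sub_card_sdiff_le_card_filter_forall_notMem {A : Type*} [DecidableEq A]
    (S : Finset (List A)) (B F : Finset A)
    (havoid : ∀ σ ∈ S, ∀ a ∈ σ, a ∉ F)
    (hdisj : ∀ σ ∈ S, ∀ σ' ∈ S, σ ≠ σ' → ∀ a ∈ σ, a ∉ σ') :
    #S - #(B \ F) ≤ #{σ ∈ S | ∀ a ∈ σ, a ∉ B} := by
  have hfaulty : #{σ ∈ S | ¬∀ a ∈ σ, a ∉ B} ≤ #(B \ F) := calc
    _ ≤ #{σ ∈ S | ∃ a ∈ σ, a ∈ B \ F} := by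
      refine card_le_card fun σ hσ => ?_
      obtain ⟨hσS, hσB⟩ := mem_filter.1 hσ
      obtain ⟨a, haσ, haB⟩ : ∃ a ∈ σ, a ∈ B := by simpa using hσB
      exact mem_filter.2 ⟨hσS, a, haσ, mem_sdiff.2 ⟨haB, havoid σ hσS a haσ⟩⟩
    _ ≤ #(B \ F) := card_filter_exists_mem_le _ _ hdisj
  have hsplit := card_filter_add_card_filter_not (s := S) (fun σ => ∀ a ∈ σ, a ∉ B)
  omega

theorem exists_finset_card_eq_getLast? {A : Type*} (T : Finset (List A))
    (hne : ∀ σ ∈ T, σ ≠ [])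
    (hdisj : ∀ σ ∈ T, ∀ σ' ∈ T, σ ≠ σ' → ∀ a ∈ σ, a ∉ σ') :
    ∃ G : Finset A, #G = #T ∧ ∀ a ∈ G, ∃ σ ∈ T, σ.getLast? = some a := by
  classical
  refine ⟨(T.image List.getLast?).eraseNone, ?_, fun a ha => ?_⟩
  · have hnone : none ∉ T.image List.getLast? := by
      simpa [List.getLast?_eq_none_iff] using hne
    rw [card_eraseNone_of_not_mem hnone,
      card_image_of_injOn (List.getLast?_injOn_of_pairwise_disjoint hdisj)]
  · simpa using mem_eraseNone.1 ha

theorem exists_k_correct_chains_general {A : Type}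
    (S : Finset (List A)) (B F : Finset A) (f k : ℕ)
    (hFB : F ⊆ B) (hB : B.card ≤ f)
    (hne : ∀ σ ∈ S, σ ≠ [])
    (havoid : ∀ σ ∈ S, ∀ a ∈ σ, a ∉ F)
    (hdisj : ∀ σ ∈ S, ∀ σ' ∈ S, σ ≠ σ' → ∀ a ∈ σ, a ∉ σ')
    (hcard : S.card ≥ k + f - F.card) :
    (∃ T ⊆ S, k ≤ T.card ∧ ∀ σ ∈ T, ∀ a ∈ σ, a ∉ B) ∧
    (∃ G : Finset A, k ≤ G.card ∧ (∀ a ∈ G, a ∉ B) ∧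
      ∀ a ∈ G, ∃ σ ∈ S, σ.getLast? = some a ∧ ∀ b ∈ σ, b ∉ B) := by
  classical
  have hkT : k ≤ #{σ ∈ S | ∀ a ∈ σ, a ∉ B} := by
    have := card_sub_card_sdiff_le_card_filter_forall_notMem S B F havoid hdisj
    rw [card_sdiff_of_subset hFB] at this
    have := card_le_card hFB
    omega
  set T := {σ ∈ S | ∀ a ∈ σ, a ∉ B}
  have hT : ∀ σ ∈ T, σ ∈ S ∧ ∀ a ∈ σ, a ∉ B := fun σ => mem_filter.1
  obtain ⟨G, hGT, hGlast⟩ := exists_finset_card_eq_getLast? T (fun σ hσ => hne σ (hT σ hσ).1)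
    (fun σ hσ σ' hσ' => hdisj σ (hT σ hσ).1 σ' (hT σ' hσ').1)
  have hGS : ∀ a ∈ G, ∃ σ ∈ S, σ.getLast? = some a ∧ ∀ b ∈ σ, b ∉ B := fun a ha => by
    obtain ⟨σ, hσ, hlast⟩ := hGlast a ha
    exact ⟨σ, (hT σ hσ).1, hlast, (hT σ hσ).2⟩
  refine ⟨⟨T, filter_subset _ _, hkT, fun σ hσ => (hT σ hσ).2⟩, G, hGT ▸ hkT, ?_, hGS⟩
  intro a ha
  obtain ⟨σ, -, hlast, hσ⟩ := hGS a ha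
  exact hσ a (List.mem_of_getLast? hlast)

/-- If at least k + f - |F| pairwise-disjoint nonempty chains avoid F ⊆ B,
|B| ≤ f, then there are at least k chains of entirely non-faulty agents and
a set G of at least k distinct non-faulty agents, each the last element of
some chain. -/
theorem exists_k_correct_chains {A : Type} [DecidableEq A]
    (S : Finset (List A)) (B F : Finset A) (f k : ℕ)
    (hk : 0 < k)
    (hFB : F ⊆ B) (hB : B.card ≤ f)
    (hne : ∀ σ ∈ S, σ ≠ [])
    (havoid : ∀ σ ∈ S, ∀ a ∈ σ, a ∉ F)
    (hdisj : ∀ σ ∈ S, ∀ σ' ∈ S, σ ≠ σ' → ∀ a ∈ σ, a ∉ σ')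
    (hcard : S.card ≥ k + f - F.card) :
    (∃ T ⊆ S, k ≤ T.card ∧ ∀ σ ∈ T, ∀ a ∈ σ, a ∉ B) ∧
    (∃ G : Finset A, k ≤ G.card ∧ (∀ a ∈ G, a ∉ B) ∧
      ∀ a ∈ G, ∃ σ ∈ S, σ.getLast? = some a ∧ ∀ b ∈ σ, b ∉ B) :=
  exists_k_correct_chains_general S B F f k hFB hB hne havoid hdisj hcard
end

section
/- From duplicate-free suffices: for a finite agent type, if the truncation property of the previous statement holds and V σ for some chain σ all of whose members are correct, then there exists a duplicate-free chain σ' with V σ', all members of σ' correct, and σ' having the same last element as σ. -/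
/-!
Cutting a chain just after the first occurrence of a repeated agent `i` leaves a strictly
shorter suffix that still contains the later copy of `i`, hence is nonempty and ends where the
original chain ends; since everything cut off is correct, the truncation rule keeps the suffix
valid. Iterating terminates in a duplicate-free chain.
-/

lemma List.exists_eq_append_cons_mem_of_not_nodup {A : Type} {l : List A} (h : ¬l.Nodup) :
    ∃ s i p, l = s ++ i :: p ∧ i ∈ p := by
  induction l with
  | nil => exact absurd List.nodup_nil h
  | cons a t ih =>
    by_cases hat : a ∈ t
    · exact ⟨[], a, t, rfl, hat⟩
    · obtain ⟨s, i, p, rfl, hip⟩ := ih fun ht => h (List.nodup_cons.mpr ⟨hat, ht⟩)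
      exact ⟨a :: s, i, p, rfl, hip⟩

lemma exists_shorter_chain_of_not_nodup {A : Type} {V : List A → Prop} {C : A → Prop}
    (htrunc : ∀ (σs : List A) (i : A) (σp : List A),
      V (σs ++ i :: σp) → σp ≠ [] → (∀ a ∈ σs ++ [i], C a) → V σp)
    {σ : List A} (hσ : V σ) (hcorr : ∀ a ∈ σ, C a) (hnd : ¬σ.Nodup) :
    ∃ τ : List A, τ.length < σ.length ∧ τ ≠ [] ∧ V τ ∧ (∀ a ∈ τ, C a) ∧
      τ.getLast? = σ.getLast? := by
  obtain ⟨s, i, p, rfl, hip⟩ := List.exists_eq_append_cons_mem_of_not_nodup hnd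
  have hp : p ≠ [] := List.ne_nil_of_mem hip
  have hprefix : ∀ a ∈ s ++ [i], C a := fun a ha => hcorr a <| by
    rw [List.append_cons]
    exact List.mem_append_left p ha
  exact ⟨p, by simp; omega, hp, htrunc s i p hσ hp hprefix, fun a ha => hcorr a (by simp [ha]),
    by rw [List.append_cons, List.getLast?_append_of_ne_nil _ hp]⟩

theorem nodup_chain_suffices_general {A : Type}
    (V : List A → Prop) (C : A → Prop)
    (htrunc : ∀ (σs : List A) (i : A) (σp : List A),
      V (σs ++ i :: σp) → σp ≠ [] → (∀ a ∈ σs ++ [i], C a) → V σp)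
    (σ : List A) (hσ : V σ) (hne : σ ≠ []) (hcorr : ∀ a ∈ σ, C a) :
    ∃ σ' : List A, σ' ≠ [] ∧ σ'.Nodup ∧ V σ' ∧ (∀ a ∈ σ', C a) ∧
      σ'.getLast? = σ.getLast? := by
  induction hn : σ.length using Nat.strong_induction_on generalizing σ with
  | _ n ih =>
    by_cases hnd : σ.Nodup
    · exact ⟨σ, hne, hnd, hσ, hcorr, rfl⟩
    obtain ⟨τ, hlt, hτne, hτ, hτcorr, hlast⟩ :=
      exists_shorter_chain_of_not_nodup htrunc hσ hcorr hnd
    obtain ⟨σ', hne', hnd', hσ', hcorr', hlast'⟩ := ih _ (hn ▸ hlt) τ hτ hτne hτcorr rfl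
    exact ⟨σ', hne', hnd', hσ', hcorr', hlast'.trans hlast⟩

/-- Duplicate-free chains suffice: if V σ for a chain of all-correct agents
and V is closed under the truncation rule, then there is a duplicate-free
valid chain of correct agents with the same last element. -/
theorem nodup_chain_suffices {A : Type} [DecidableEq A]
    (V : List A → Prop) (C : A → Prop)
    (htrunc : ∀ (σs : List A) (i : A) (σp : List A),
      V (σs ++ i :: σp) → σp ≠ [] → (∀ a ∈ σs ++ [i], C a) → V σp)
    (σ : List A) (hσ : V σ) (hne : σ ≠ []) (hcorr : ∀ a ∈ σ, C a) :
    ∃ σ' : List A, σ' ≠ [] ∧ σ'.Nodup ∧ V σ' ∧ (∀ a ∈ σ', C a) ∧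
      σ'.getLast? = σ.getLast? :=
  nodup_chain_suffices_general V C htrunc σ hσ hne hcorr
end
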